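/- arXiv:2210.02738 — 3 statements merged into one kernel-verified Lean document; each statement's English description precedes it below -/
import Mathlib

section
/- For every feasible point x of the problem min ‖Ax−b‖₂ subject to x ∈ [0,1]^n, ‖x‖₀ ≤ σ, there exists x′ ∈ [0,1]^n with Ax = Ax′, ‖x′‖₀ ≤ σ, and x′ has at most m fractional (non-integer) entries. -/
/-!
If more than `m` entries of `x ∈ [0,1]ⁿ` are fractional, the corresponding columns of the
`m × n` matrix `A` are linearly dependent, so some `d ≠ 0` supported on those entries satisfies
`A d = 0`. Moving from `x` along `d` up to the first time a coordinate reaches `0` or `1` keeps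
`Ax` and the cube, fixes every integral entry (in particular every zero), and makes one more entry
integral. Iterating brings the number of fractional entries down to at most `m`.
-/

open scoped BigOperators Classical

noncomputable def l0 {n : ℕ} (v : Fin n → ℝ) : ℕ :=
  (Finset.univ.filter (fun i => v i ≠ 0)).card

open Finset Matrix

theorem Matrix.exists_mulVec_eq_zero_of_card_lt {κ ι K : Type*} [Fintype κ] [Fintype ι] [Field K]
    (B : Matrix κ ι K) (s : Finset ι) (h : Fintype.card κ < #s) :
    ∃ d ≠ 0, B *ᵥ d = 0 ∧ ∀ i ∉ s, d i = 0 := by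
  let extend := Function.ExtendByZero.linearMap K ((↑) : s → ι)
  have hker : LinearMap.ker (B.mulVecLin ∘ₗ extend) ≠ ⊥ :=
    LinearMap.ker_ne_bot_of_finrank_lt (by simpa using h)
  obtain ⟨v, hv, hv0⟩ := Submodule.exists_mem_ne_zero_of_ne_bot hker
  refine ⟨extend v, ?_, hv, fun i hi => Function.extend_apply' _ _ _ ?_⟩
  · exact fun h => hv0 (Function.extend_injective Subtype.val_injective (0 : ι → K)
      (h.trans (map_zero extend).symm))
  · rintro ⟨j, rfl⟩
    exact hi j.2

/-- The largest `t ≥ 0` with `a + t * d ∈ [0, 1]`, for `a ∈ [0, 1]` and `d ≠ 0`. -/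
noncomputable def stepToBoundary (a d : ℝ) : ℝ :=
  if 0 < d then (1 - a) / d else a / -d

section stepToBoundary

variable {a d t : ℝ}

theorem stepToBoundary_nonneg (ha : a ∈ Set.Icc 0 1) : 0 ≤ stepToBoundary a d := by
  unfold stepToBoundary
  split_ifs with hd
  · exact div_nonneg (by linarith [ha.2]) hd.le
  · exact div_nonneg ha.1 (by linarith)

theorem add_mul_mem_Icc_of_le_stepToBoundary (ha : a ∈ Set.Icc 0 1) (ht₀ : 0 ≤ t)
    (ht : t ≤ stepToBoundary a d) : a + t * d ∈ Set.Icc 0 1 := by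
  obtain ⟨ha₀, ha₁⟩ := ha
  unfold stepToBoundary at ht
  rcases lt_trichotomy d 0 with hd | rfl | hd
  · rw [if_neg hd.not_gt, le_div_iff₀ (neg_pos.mpr hd)] at ht
    constructor <;> nlinarith
  · simpa using And.intro ha₀ ha₁
  · rw [if_pos hd, le_div_iff₀ hd] at ht
    constructor <;> nlinarith

theorem exists_int_add_stepToBoundary_mul (hd : d ≠ 0) :
    ∃ z : ℤ, a + stepToBoundary a d * d = z := by
  unfold stepToBoundary
  split_ifs with hpos
  · exact ⟨1, by field_simp; push_cast; ring⟩
  · exact ⟨0, by field_simp; push_cast; ring⟩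

end stepToBoundary

theorem exists_add_mul_mem_Icc_and_int {ι : Type*} [Fintype ι] {x d : ι → ℝ}
    (hx : ∀ i, x i ∈ Set.Icc 0 1) (hd : d ≠ 0) :
    ∃ t : ℝ, (∀ i, x i + t * d i ∈ Set.Icc 0 1) ∧ ∃ i, d i ≠ 0 ∧ ∃ z : ℤ, x i + t * d i = z := by
  have hS : (univ.filter fun i => d i ≠ 0).Nonempty := by
    obtain ⟨i, hi⟩ := Function.ne_iff.mp hd
    exact ⟨i, by simpa using hi⟩
  obtain ⟨i₀, hi₀, hmin⟩ := (univ.filter fun i => d i ≠ 0).exists_min_image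
    (fun i => stepToBoundary (x i) (d i)) hS
  have hi₀ : d i₀ ≠ 0 := (mem_filter.mp hi₀).2
  refine ⟨stepToBoundary (x i₀) (d i₀), fun i => ?_, i₀, hi₀,
    exists_int_add_stepToBoundary_mul hi₀⟩
  by_cases hi : d i = 0
  · simpa [hi] using hx i
  · exact add_mul_mem_Icc_of_le_stepToBoundary (hx i) (stepToBoundary_nonneg (hx i₀))
      (hmin i (by simpa using hi))

section fractionalSupport

variable {ι κ : Type*} [Fintype ι] [Fintype κ]

noncomputable def fractionalSupport (x : ι → ℝ) : Finset ι :=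
  univ.filter fun i => ¬ ∃ z : ℤ, x i = z

theorem mem_fractionalSupport {x : ι → ℝ} {i : ι} :
    i ∈ fractionalSupport x ↔ ¬ ∃ z : ℤ, x i = z := by
  simp [fractionalSupport]

theorem fractionalSupport_subset_of_eqOn {x y : ι → ℝ}
    (hxy : ∀ i ∉ fractionalSupport x, y i = x i) : fractionalSupport y ⊆ fractionalSupport x := by
  intro i hi
  by_contra hix
  rw [mem_fractionalSupport, hxy i hix, ← mem_fractionalSupport] at hi
  exact hix hi

theorem exists_fractionalSupport_ssubset (B : Matrix κ ι ℝ) {x : ι → ℝ}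
    (hx : ∀ i, x i ∈ Set.Icc 0 1) (h : Fintype.card κ < #(fractionalSupport x)) :
    ∃ y : ι → ℝ, (∀ i, y i ∈ Set.Icc 0 1) ∧ B *ᵥ y = B *ᵥ x ∧
      (∀ i ∉ fractionalSupport x, y i = x i) ∧ fractionalSupport y ⊂ fractionalSupport x := by
  obtain ⟨d, hd, hBd, hds⟩ := B.exists_mulVec_eq_zero_of_card_lt _ h
  obtain ⟨t, hIcc, i₀, hi₀, hint⟩ := exists_add_mul_mem_Icc_and_int hx hd
  have hfix : ∀ i ∉ fractionalSupport x, (x + t • d) i = x i := fun i hi => by simp [hds i hi]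
  refine ⟨x + t • d, hIcc, by simp [mulVec_add, mulVec_smul, hBd], hfix,
    (ssubset_iff_of_subset (fractionalSupport_subset_of_eqOn hfix)).mpr ⟨i₀, ?_, ?_⟩⟩
  · by_contra hi
    exact hi₀ (hds i₀ hi)
  · simpa [mem_fractionalSupport] using hint

theorem exists_card_fractionalSupport_le (B : Matrix κ ι ℝ) {x : ι → ℝ}
    (hx : ∀ i, x i ∈ Set.Icc 0 1) :
    ∃ y : ι → ℝ, (∀ i, y i ∈ Set.Icc 0 1) ∧ B *ᵥ y = B *ᵥ x ∧
      (∀ i ∉ fractionalSupport x, y i = x i) ∧ #(fractionalSupport y) ≤ Fintype.card κ := by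
  induction hk : #(fractionalSupport x) using Nat.strong_induction_on generalizing x with
  | _ k ih =>
    by_cases hle : k ≤ Fintype.card κ
    · exact ⟨x, hx, rfl, fun _ _ => rfl, hk ▸ hle⟩
    obtain ⟨y, hy, hBy, hyx, hss⟩ := exists_fractionalSupport_ssubset B hx (by omega)
    obtain ⟨z, hz, hBz, hzy, hcard⟩ := ih _ (hk ▸ card_lt_card hss) hy rfl
    refine ⟨z, hz, hBz.trans hBy, fun i hi => ?_, hcard⟩
    rw [hzy i (fun h => hi (fractionalSupport_subset_of_eqOn hyx h)), hyx i hi]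

end fractionalSupport

theorem l0_le_of_eqOn_fractionalSupport_compl {n : ℕ} {x y : Fin n → ℝ}
    (hxy : ∀ i ∉ fractionalSupport x, y i = x i) : l0 y ≤ l0 x := by
  refine card_le_card fun i hi => mem_filter.mpr ⟨mem_univ i, fun hxi => (mem_filter.mp hi).2 ?_⟩
  rw [hxy i (by simpa [mem_fractionalSupport, hxi] using ⟨0, Int.cast_zero.symm⟩), hxi]

theorem few_fractional_l0_general (m n : ℕ) (A : Matrix (Fin m) (Fin n) ℤ)
    (σ : ℕ) (x : Fin n → ℝ)
    (hx01 : ∀ i, 0 ≤ x i ∧ x i ≤ 1) (hx0 : l0 x ≤ σ) :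
    ∃ x' : Fin n → ℝ, (∀ i, 0 ≤ x' i ∧ x' i ≤ 1) ∧ l0 x' ≤ σ ∧
      (∀ r : Fin m, ∑ j, (A r j : ℝ) * x' j = ∑ j, (A r j : ℝ) * x j) ∧
      (Finset.univ.filter (fun i => ¬ ∃ z : ℤ, x' i = z)).card ≤ m := by
  obtain ⟨y, hy, hAy, hyx, hcard⟩ :=
    exists_card_fractionalSupport_le (A.map (Int.cast : ℤ → ℝ)) hx01
  exact ⟨y, hy, (l0_le_of_eqOn_fractionalSupport_compl hyx).trans hx0, fun r => congrFun hAy r,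
    hcard.trans_eq (Fintype.card_fin m)⟩

/-- every feasible point of the ℓ₀-problem has an equivalent
feasible point (same image under A) with at most m fractional entries. -/
theorem few_fractional_l0 (m n : ℕ) (A : Matrix (Fin m) (Fin n) ℤ)
    (σ : ℕ) (hσ : 1 ≤ σ) (x : Fin n → ℝ)
    (hx01 : ∀ i, 0 ≤ x i ∧ x i ≤ 1) (hx0 : l0 x ≤ σ) :
    ∃ x' : Fin n → ℝ, (∀ i, 0 ≤ x' i ∧ x' i ≤ 1) ∧ l0 x' ≤ σ ∧
      (∀ r : Fin m, ∑ j, (A r j : ℝ) * x' j = ∑ j, (A r j : ℝ) * x j) ∧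
      (Finset.univ.filter (fun i => ¬ ∃ z : ℤ, x' i = z)).card ≤ m :=
  few_fractional_l0_general m n A σ x hx01 hx0
end

section
/- Let x̂ minimize ‖Ax−b‖₂ over K = {x ∈ [0,1]^n : ‖x‖₁ ≤ σ} and let F = {i : x̂_i ∉ ℤ}. For any λ ∈ ℝ^F with Σ_{i∈F} λ_i = 0, the point Ax̂ + Σ_{i∈F} λ_i A_i lies in the hyperplane H = {y ∈ ℝ^m : (b−Ax̂)ᵀ y = (b−Ax̂)ᵀ Ax̂}, i.e., (b−Ax̂)ᵀ (Σ_{i∈F} λ_i A_i) = 0. -/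
/-!
Moving `x̂` along `t ↦ x̂ + t • λ` keeps it feasible for all small `t` of either sign: the box
constraints only bind on coordinates where `λ` vanishes, and `Σ λᵢ = 0` keeps the ℓ₁-norm of a
nonnegative vector unchanged. So `t ↦ ‖A(x̂ + t λ) − b‖²` has a local minimum at `t = 0`, and its
derivative there, `2 (Ax̂ − b)ᵀ (Aλ)`, vanishes.
-/

open scoped BigOperators

noncomputable def l2 {m : ℕ} (v : Fin m → ℝ) : ℝ := Real.sqrt (∑ i, (v i) ^ 2)

def l1 {n : ℕ} (v : Fin n → ℝ) : ℝ := ∑ i, |v i|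

open Filter Topology

theorem l1_eq_sum_of_nonneg {n : ℕ} {v : Fin n → ℝ} (hv : ∀ i, 0 ≤ v i) : l1 v = ∑ i, v i :=
  Finset.sum_congr rfl fun i _ => abs_of_nonneg (hv i)

theorem l2_sq {m : ℕ} (v : Fin m → ℝ) : l2 v ^ 2 = ∑ i, v i ^ 2 :=
  Real.sq_sqrt (Finset.sum_nonneg fun i _ => sq_nonneg (v i))

theorem hasDerivAt_sum_sq_add_mul {ι : Type*} [Fintype ι] (w z : ι → ℝ) (t₀ : ℝ) :
    HasDerivAt (fun t => ∑ r, (w r + t * z r) ^ 2) (2 * ∑ r, (w r + t₀ * z r) * z r) t₀ := by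
  rw [Finset.mul_sum]
  refine HasDerivAt.fun_sum fun r _ => ?_
  refine ((((hasDerivAt_id' t₀).mul_const (z r)).const_add (w r)).fun_pow 2).congr_deriv ?_
  norm_num
  ring

theorem eventually_mem_box_add_smul {ι : Type*} [Finite ι] {x d : ι → ℝ}
    (hx : ∀ i, 0 ≤ x i ∧ x i ≤ 1) (hd : ∀ i, d i ≠ 0 → 0 < x i ∧ x i < 1) :
    ∀ᶠ t in 𝓝 (0 : ℝ), ∀ i, 0 ≤ (x + t • d) i ∧ (x + t • d) i ≤ 1 := by
  refine eventually_all.2 fun i => ?_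
  by_cases hdi : d i = 0
  · simpa [hdi] using Eventually.of_forall (f := 𝓝 (0 : ℝ)) fun _ => hx i
  · have hcont : Continuous fun t : ℝ => x i + t * d i := by fun_prop
    have hopen : ∀ᶠ t in 𝓝 (0 : ℝ), x i + t * d i ∈ Set.Ioo (0 : ℝ) 1 :=
      hcont.continuousAt.eventually_mem (isOpen_Ioo.mem_nhds (by simpa using hd i hdi))
    filter_upwards [hopen] with t ht
    simpa using And.intro ht.1.le ht.2.le

theorem l1_add_smul_of_sum_eq_zero {n : ℕ} {x d : Fin n → ℝ} {t : ℝ} (hx : ∀ i, 0 ≤ x i)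
    (hxd : ∀ i, 0 ≤ (x + t • d) i) (hd : ∑ i, d i = 0) : l1 (x + t • d) = l1 x := by
  rw [l1_eq_sum_of_nonneg hxd, l1_eq_sum_of_nonneg hx]
  simp [Finset.sum_add_distrib, ← Finset.mul_sum, hd]

theorem isLocalMin_sum_sq_residual_of_optimal {m n : ℕ} (A : Matrix (Fin m) (Fin n) ℝ)
    (b : Fin m → ℝ) (σ : ℝ) (xhat : Fin n → ℝ) (hbox : ∀ i, 0 ≤ xhat i ∧ xhat i ≤ 1)
    (hopt : ∀ x : Fin n → ℝ, (∀ i, 0 ≤ x i ∧ x i ≤ 1) → l1 x ≤ σ →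
      l2 (A.mulVec xhat - b) ≤ l2 (A.mulVec x - b))
    (hl1 : l1 xhat ≤ σ) (d : Fin n → ℝ) (hd : ∀ i, d i ≠ 0 → 0 < xhat i ∧ xhat i < 1)
    (hsum : ∑ i, d i = 0) :
    IsLocalMin (fun t => ∑ r, ((A.mulVec xhat - b) r + t * A.mulVec d r) ^ 2) 0 := by
  filter_upwards [eventually_mem_box_add_smul hbox hd] with t ht
  have hfeas : l1 (xhat + t • d) ≤ σ := by
    rwa [l1_add_smul_of_sum_eq_zero (fun i => (hbox i).1) (fun i => (ht i).1) hsum]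
  have hle : l2 (A.mulVec xhat - b) ^ 2 ≤ l2 (A.mulVec (xhat + t • d) - b) ^ 2 :=
    pow_le_pow_left₀ (Real.sqrt_nonneg _) (hopt _ ht hfeas) 2
  rw [l2_sq, l2_sq] at hle
  simpa [Matrix.mulVec_add, Matrix.mulVec_smul, add_sub_right_comm] using hle

theorem fractional_directions_in_hyperplane_general (m n : ℕ)
    (A : Matrix (Fin m) (Fin n) ℝ) (b : Fin m → ℝ) (σ : ℕ)
    (xhat : Fin n → ℝ)
    (hfeas : (∀ i, 0 ≤ xhat i ∧ xhat i ≤ 1) ∧ l1 xhat ≤ σ)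
    (hopt : ∀ x : Fin n → ℝ, (∀ i, 0 ≤ x i ∧ x i ≤ 1) → l1 x ≤ σ →
      l2 (A.mulVec xhat - b) ≤ l2 (A.mulVec x - b))
    (lam : Fin n → ℝ)
    (hsupp : ∀ i, lam i ≠ 0 → 0 < xhat i ∧ xhat i < 1)
    (hsum : (∑ i, lam i) = 0) :
    (∑ r, (b r - A.mulVec xhat r) * (∑ i, lam i * A r i)) = 0 := by
  have hmin := isLocalMin_sum_sq_residual_of_optimal A b σ xhat hfeas.1 hopt hfeas.2 lam hsupp hsum
  have hcrit := hmin.hasDerivAt_eq_zero (hasDerivAt_sum_sq_add_mul _ _ 0)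
  have hdot : ∑ r, (A.mulVec xhat - b) r * A.mulVec lam r = 0 := by simpa using hcrit
  rw [← neg_eq_zero, ← hdot, ← Finset.sum_neg_distrib]
  refine Finset.sum_congr rfl fun r _ => ?_
  simp only [Matrix.mulVec, dotProduct, Pi.sub_apply, mul_comm (A r _)]
  ring

/-- for an optimal solution `x̂` of the ℓ₁-relaxation and any
combination `Σ_{i∈F} λ_i A_i` of columns with fractional indices and
`Σ λ_i = 0`, we have `(b−Ax̂)ᵀ(Σ λ_i A_i) = 0`, i.e. `Ax̂ + Σ λ_i A_i ∈ H`. -/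
theorem fractional_directions_in_hyperplane (m n : ℕ)
    (A : Matrix (Fin m) (Fin n) ℝ) (b : Fin m → ℝ) (σ : ℕ) (hσ : 1 ≤ σ)
    (xhat : Fin n → ℝ)
    (hfeas : (∀ i, 0 ≤ xhat i ∧ xhat i ≤ 1) ∧ l1 xhat ≤ σ)
    (hopt : ∀ x : Fin n → ℝ, (∀ i, 0 ≤ x i ∧ x i ≤ 1) → l1 x ≤ σ →
      l2 (A.mulVec xhat - b) ≤ l2 (A.mulVec x - b))
    (lam : Fin n → ℝ)
    (hsupp : ∀ i, lam i ≠ 0 → 0 < xhat i ∧ xhat i < 1)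
    (hsum : (∑ i, lam i) = 0) :
    (∑ r, (b r - A.mulVec xhat r) * (∑ i, lam i * A r i)) = 0 :=
  fractional_directions_in_hyperplane_general m n A b σ xhat hfeas hopt lam hsupp hsum
end

section
/- Let P = {x ∈ [0,1]^n : Σ x_i ≤ σ} with 1 ≤ σ ≤ n, and w = (σ/(n+σ))·𝟙. Then for t = σ/n, w + t(w − P) ⊆ P; in particular the asymmetry coefficient α(P : w) = sup{t : w + t(w−P) ⊆ P} is at least σ/n. -/
open scoped BigOperators

/-!
With `t = σ/n` the weight `w = (σ/(n+σ))·𝟙` satisfies `w(1 + t) = t·𝟙`, so the homothety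
`p ↦ w + t(w − p)` is `p ↦ t(𝟙 − p)`. It maps `[0,1]^n` into the small cube `[0,t]^n`, and that
cube lies in `P` because its top corner has coordinate sum `n t = σ`. Testing `p = 0` shows that
the admissible `t` are bounded, so the supremum is at least `σ/n`.
-/

namespace CappedCube

lemma const_add_smul_sub_eq_smul_one_sub {ι R : Type*} [CommRing R] {c t : R}
    (h : c * (1 + t) = t) (p : ι → R) :
    (fun _ => c) + t • ((fun _ => c) - p) = t • (1 - p) := by
  ext i
  simp only [Pi.add_apply, Pi.smul_apply, Pi.sub_apply, Pi.one_apply, smul_eq_mul]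
  linear_combination h

variable {ι : Type*} [Fintype ι]

def cappedCube (s : ℝ) : Set (ι → ℝ) :=
  {x | (∀ i, 0 ≤ x i ∧ x i ≤ 1) ∧ ∑ i, x i ≤ s}

lemma zero_mem_cappedCube {s : ℝ} (hs : 0 ≤ s) : (0 : ι → ℝ) ∈ cappedCube s :=
  ⟨fun _ => ⟨le_rfl, zero_le_one⟩, by simpa using hs⟩

lemma mem_cappedCube_of_le_const {s t : ℝ} (ht : t ≤ 1) (hts : Fintype.card ι * t ≤ s)
    {x : ι → ℝ} (hx₀ : 0 ≤ x) (hxt : x ≤ fun _ => t) : x ∈ cappedCube s := by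
  refine ⟨fun i => ⟨hx₀ i, (hxt i).trans ht⟩, ?_⟩
  calc ∑ i, x i ≤ ∑ _ : ι, t := Finset.sum_le_sum fun i _ => hxt i
    _ = Fintype.card ι * t := by simp
    _ ≤ s := hts

lemma smul_one_sub_mem_cappedCube {s t : ℝ} (ht₀ : 0 ≤ t) (ht₁ : t ≤ 1)
    (hts : Fintype.card ι * t ≤ s) {p : ι → ℝ} (hp : p ∈ cappedCube s) :
    t • (1 - p) ∈ cappedCube s := by
  refine mem_cappedCube_of_le_const ht₁ hts (fun i => ?_) (fun i => ?_) <;>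
    simp only [Pi.smul_apply, Pi.sub_apply, Pi.one_apply, Pi.zero_apply, smul_eq_mul]
  · exact mul_nonneg ht₀ (sub_nonneg.2 (hp.1 i).2)
  · exact mul_le_of_le_one_right ht₀ (by linarith [(hp.1 i).1])

lemma bddAbove_homothety_ratios_cappedCube [Nonempty ι] {s c : ℝ} (hs : 0 ≤ s) (hc : 0 < c) :
    BddAbove {t : ℝ | ∀ p ∈ cappedCube s,
      (fun _ => c) + t • ((fun _ => c) - p) ∈ cappedCube (ι := ι) s} := by
  refine ⟨(1 - c) / c, fun t ht => ?_⟩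
  have hcoord := ((ht 0 (zero_mem_cappedCube hs)).1 (Classical.arbitrary ι)).2
  simp only [Pi.add_apply, Pi.smul_apply, sub_zero, smul_eq_mul] at hcoord
  rw [le_div_iff₀ hc]
  linarith

end CappedCube

open CappedCube in
/-- for `P = {x ∈ [0,1]^n : Σ x_i ≤ σ}` with `1 ≤ σ ≤ n` and
`w = (σ/(n+σ))·𝟙`, taking `t = σ/n` we have `w + t(w − P) ⊆ P`; in particular
the asymmetry coefficient `α(P : w) = sup{t : w + t(w−P) ⊆ P}` is at least
`σ/n`. -/
theorem asymmetry_coefficient_bound (n σ : ℕ) (hσ : 1 ≤ σ) (hσn : σ ≤ n)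
    (P : Set (Fin n → ℝ))
    (hP : P = {x : Fin n → ℝ | (∀ i, 0 ≤ x i ∧ x i ≤ 1) ∧ (∑ i, x i) ≤ σ})
    (w : Fin n → ℝ) (hw : w = fun _ => (σ : ℝ) / (n + σ)) :
    (∀ p ∈ P, w + ((σ : ℝ) / n) • (w - p) ∈ P) ∧
    (σ : ℝ) / n ≤ sSup {t : ℝ | ∀ p ∈ P, w + t • (w - p) ∈ P} := by
  have hσ₀ : (0 : ℝ) < σ := by exact_mod_cast hσ
  have hn : (0 : ℝ) < n := by exact_mod_cast hσ.trans hσn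
  have : Nonempty (Fin n) := ⟨⟨0, by exact_mod_cast hn⟩⟩
  have hw_fixed : (σ : ℝ) / (n + σ) * (1 + σ / n) = σ / n := by
    field_simp
  have hmaps : ∀ p ∈ cappedCube (σ : ℝ), w + ((σ : ℝ) / n) • (w - p) ∈ cappedCube (σ : ℝ) := by
    intro p hp
    rw [hw, const_add_smul_sub_eq_smul_one_sub hw_fixed]
    refine smul_one_sub_mem_cappedCube (by positivity) ?_ ?_ hp
    · exact (div_le_one hn).2 (by exact_mod_cast hσn)
    · rw [Fintype.card_fin, mul_div_cancel₀ _ hn.ne']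
  change P = cappedCube (σ : ℝ) at hP
  subst hP
  refine ⟨hmaps, le_csSup ?_ hmaps⟩
  rw [hw]
  exact bddAbove_homothety_ratios_cappedCube hσ₀.le (by positivity)
end
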